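/- For any (t,x) ∈ ℕ × ∂B with t ≥ 1, the determinant of the square matrix W^+_{t,x} equals ∏_{(s,y)∈S(t,x)} P(Z^y_s = y + s e_d), the determinant of W^−_{t,x} equals ∏_{(s,y)∈S(t,x)} P(Z^y_s = y − s e_d), and both determinants are strictly positive; in particular the matrices W^±_{t,x} are invertible. -/

import Mathlib

open Finset

/-- The `i`-th standard unit vector `e_i` in `ℤ^(d+1)`. -/
def unitVec (d : ℕ) (i : Fin (d + 1)) : Fin (d + 1) → ℤ := Pi.single i 1

/-- The ℓ¹-norm `‖v‖₁ = ∑ i, |v i|` on `ℤ^(d+1)`. -/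
def norm1 {d : ℕ} (v : Fin (d + 1) → ℤ) : ℤ := ∑ i, |v i|

/-- `P t x z` represents the `t`-step transition probability `P(Z^x_t = z)` of a
time-homogeneous Markov chain on `ℤ^(d+1)` which at each step moves by `± e_i`,
with all `2(d+1)` one-step probabilities strictly positive and summing to `1`. -/
structure IsRandomWalk (d : ℕ)
    (P : ℕ → (Fin (d + 1) → ℤ) → (Fin (d + 1) → ℤ) → ℝ) : Prop where
  nonneg : ∀ t x z, 0 ≤ P t x z
  init : ∀ x z, P 0 x z = if z = x then 1 else 0
  step : ∀ t x z, P (t + 1) x z =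
      ∑ i, P 1 x (x + unitVec d i) * P t (x + unitVec d i) z
        + ∑ i, P 1 x (x - unitVec d i) * P t (x - unitVec d i) z
  sum_one : ∀ x, (∑ i, P 1 x (x + unitVec d i)) + (∑ i, P 1 x (x - unitVec d i)) = 1
  pos_add : ∀ x i, 0 < P 1 x (x + unitVec d i)
  pos_sub : ∀ x i, 0 < P 1 x (x - unitVec d i)

/-- The expectation `E[h(Z^x_t)]` (the law of `Z^x_t` has finite support). -/
noncomputable def expect {d : ℕ} (P : ℕ → (Fin (d + 1) → ℤ) → (Fin (d + 1) → ℤ) → ℝ)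
    (t : ℕ) (x : Fin (d + 1) → ℤ) (h : (Fin (d + 1) → ℤ) → ℝ) : ℝ :=
  ∑ᶠ z, h z * P t x z

/-- The finite set `S(t,x) = {(s,y) ∈ ℕ × ∂B : 1 ≤ s ≤ t, ‖y − x‖₁ ≤ t − s,
and t − s − ‖y − x‖₁ is even}`. -/
noncomputable def Sset (d t : ℕ) (x : Fin (d + 1) → ℤ) : Finset (ℕ × (Fin (d + 1) → ℤ)) :=
  ((Finset.Icc 1 t) ×ˢ (Fintype.piFinset fun i => Finset.Icc (x i - t) (x i + t))).filter
    (fun p => p.2 (Fin.last d) = 0 ∧ norm1 (p.2 - x) ≤ (t : ℤ) - p.1 ∧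
      Even ((t : ℤ) - p.1 - norm1 (p.2 - x)))

/-- The matrix `W^+_{t,x}`, with entries `(W^+)_{(s,y),(u,z)} = P(Z^y_s = z + u e_d)`. -/
noncomputable def Wplus {d : ℕ} (P : ℕ → (Fin (d + 1) → ℤ) → (Fin (d + 1) → ℤ) → ℝ)
    (t : ℕ) (x : Fin (d + 1) → ℤ) :
    Matrix {p // p ∈ Sset d t x} {p // p ∈ Sset d t x} ℝ :=
  fun p q => P p.1.1 p.1.2 (q.1.2 + Pi.single (Fin.last d) (q.1.1 : ℤ))

/-- The matrix `W^-_{t,x}`, with entries `(W^-)_{(s,y),(u,z)} = P(Z^y_s = z - u e_d)`. -/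
noncomputable def Wminus {d : ℕ} (P : ℕ → (Fin (d + 1) → ℤ) → (Fin (d + 1) → ℤ) → ℝ)
    (t : ℕ) (x : Fin (d + 1) → ℤ) :
    Matrix {p // p ∈ Sset d t x} {p // p ∈ Sset d t x} ℝ :=
  fun p q => P p.1.1 p.1.2 (q.1.2 - Pi.single (Fin.last d) (q.1.1 : ℤ))

/-- `N_{t,x} = (W^-_{t,x})⁻¹ W^+_{t,x}`. -/
noncomputable def Nmat {d : ℕ} (P : ℕ → (Fin (d + 1) → ℤ) → (Fin (d + 1) → ℤ) → ℝ)
    (t : ℕ) (x : Fin (d + 1) → ℤ) :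
    Matrix {p // p ∈ Sset d t x} {p // p ∈ Sset d t x} ℝ :=
  (Wminus P t x)⁻¹ * Wplus P t x

/-- The extended transform `N f`, vanishing outside `{w : w_d < 0}`, defined at a point
`w = x − t e_d` (with `x ∈ ∂B`, `t ≥ 1`) as the `(t,x)`-component of `N_{t,x}` applied to
the vector `(f(z + u e_d))_{(u,z) ∈ S(t,x)}`.  (Note that `(t,x) ∈ S(t,x)` always holds
in this situation, so the guard below is satisfied exactly when `w_d < 0`.) -/
noncomputable def Ntrans {d : ℕ} (P : ℕ → (Fin (d + 1) → ℤ) → (Fin (d + 1) → ℤ) → ℝ)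
    (f : (Fin (d + 1) → ℤ) → ℝ) : (Fin (d + 1) → ℤ) → ℝ := fun w =>
  if hm : ((-(w (Fin.last d))).toNat, Function.update w (Fin.last d) 0) ∈
      Sset d (-(w (Fin.last d))).toNat (Function.update w (Fin.last d) 0) then
    (Nmat P (-(w (Fin.last d))).toNat (Function.update w (Fin.last d) 0)).mulVec
      (fun p => f (p.1.2 + Pi.single (Fin.last d) (p.1.1 : ℤ)))
      ⟨((-(w (Fin.last d))).toNat, Function.update w (Fin.last d) 0), hm⟩
  else 0

/-!
A walk with unit steps started at `y ∈ ∂B` cannot be at `z ± u e_d` (with `z ∈ ∂B`) after `s`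
steps unless `‖z - y‖₁ + u ≤ s`. Ordering `S(t,x)` by decreasing time therefore makes `W^±_{t,x}`
block triangular with diagonal blocks, so its determinant is the product of the diagonal entries
`P(Z^y_s = y ± s e_d)`, each positive because the straight path up (down) has positive probability.
-/

theorem Matrix.BlockTriangular.det_eq_prod_diag {m α R : Type*} [Fintype m] [DecidableEq m]
    [CommRing R] [LinearOrder α] {M : Matrix m m R} {b : m → α} (hM : M.BlockTriangular b)
    (hblock : ∀ i j, i ≠ j → b i = b j → M i j = 0) :
    M.det = ∏ i, M i i := by
  classical
  have hdiag : ∀ a, M.toSquareBlock b a = Matrix.diagonal fun i => M i.1 i.1 := fun a => by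
    ext i j
    by_cases hij : i = j
    · subst hij; simp [Matrix.toSquareBlock_def]
    · rw [Matrix.diagonal_apply_ne _ hij, Matrix.toSquareBlock_def, Matrix.of_apply]
      exact hblock _ _ (Subtype.coe_injective.ne hij) (i.2.trans j.2.symm)
  rw [hM.det, ← prod_fiberwise_of_maps_to (g := b) (fun i _ => mem_image_of_mem b (mem_univ i))]
  refine prod_congr rfl fun a _ => ?_
  rw [hdiag, Matrix.det_diagonal]
  exact (prod_subtype _ (fun i => by simp) (fun i => M i i)).symm

section norm1

variable {d : ℕ}

lemma norm1_nonneg (v : Fin (d + 1) → ℤ) : 0 ≤ norm1 v :=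
  sum_nonneg fun i _ => abs_nonneg (v i)

lemma norm1_pos {v : Fin (d + 1) → ℤ} (hv : v ≠ 0) : 0 < norm1 v := by
  obtain ⟨i, hi⟩ := Function.ne_iff.mp hv
  exact sum_pos' (fun j _ => abs_nonneg (v j)) ⟨i, mem_univ i, abs_pos.mpr hi⟩

lemma norm1_add_le (u v : Fin (d + 1) → ℤ) : norm1 (u + v) ≤ norm1 u + norm1 v := by
  rw [norm1, norm1, norm1, ← sum_add_distrib]
  exact sum_le_sum fun i _ => abs_add_le (u i) (v i)

lemma norm1_neg (v : Fin (d + 1) → ℤ) : norm1 (-v) = norm1 v := by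
  simp [norm1]

lemma norm1_single (i : Fin (d + 1)) (c : ℤ) : norm1 (Pi.single i c) = |c| := by
  simp [norm1, apply_ite abs, Pi.single_apply]

lemma norm1_unitVec (i : Fin (d + 1)) : norm1 (unitVec d i) = 1 := by
  rw [unitVec, norm1_single, abs_one]

lemma norm1_add_single_of_eq_zero {v : Fin (d + 1) → ℤ} {i : Fin (d + 1)} (hv : v i = 0)
    (c : ℤ) : norm1 (v + Pi.single i c) = norm1 v + |c| := by
  have hsplit : ∀ j, |(v + Pi.single i c : Fin (d + 1) → ℤ) j| =
      |v j| + |(Pi.single i c : Fin (d + 1) → ℤ) j| := fun j => by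
    rcases eq_or_ne j i with rfl | h
    · simp [hv]
    · simp [h]
  rw [← norm1_single i c, norm1, sum_congr rfl fun j _ => hsplit j, sum_add_distrib]
  rfl

end norm1

namespace IsRandomWalk

variable {d : ℕ} {P : ℕ → (Fin (d + 1) → ℤ) → (Fin (d + 1) → ℤ) → ℝ}

lemma mul_le_succ_of_add (hP : IsRandomWalk d P) (s : ℕ) (y z : Fin (d + 1) → ℤ)
    (i : Fin (d + 1)) :
    P 1 y (y + unitVec d i) * P s (y + unitVec d i) z ≤ P (s + 1) y z := by
  have hterm : ∀ (v : Fin (d + 1) → (Fin (d + 1) → ℤ)) j, 0 ≤ P 1 y (v j) * P s (v j) z :=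
    fun _ _ => mul_nonneg (hP.nonneg _ _ _) (hP.nonneg _ _ _)
  rw [hP.step s]
  exact (single_le_sum (fun j _ => hterm (y + unitVec d ·) j) (mem_univ i)).trans
    (le_add_of_nonneg_right (sum_nonneg fun j _ => hterm (y - unitVec d ·) j))

lemma mul_le_succ_of_sub (hP : IsRandomWalk d P) (s : ℕ) (y z : Fin (d + 1) → ℤ)
    (i : Fin (d + 1)) :
    P 1 y (y - unitVec d i) * P s (y - unitVec d i) z ≤ P (s + 1) y z := by
  have hterm : ∀ (v : Fin (d + 1) → (Fin (d + 1) → ℤ)) j, 0 ≤ P 1 y (v j) * P s (v j) z :=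
    fun _ _ => mul_nonneg (hP.nonneg _ _ _) (hP.nonneg _ _ _)
  rw [hP.step s]
  exact (single_le_sum (fun j _ => hterm (y - unitVec d ·) j) (mem_univ i)).trans
    (le_add_of_nonneg_left (sum_nonneg fun j _ => hterm (y + unitVec d ·) j))

lemma pos_add_single (hP : IsRandomWalk d P) (i : Fin (d + 1)) (s : ℕ)
    (y : Fin (d + 1) → ℤ) : 0 < P s y (y + Pi.single i (s : ℤ)) := by
  induction s generalizing y with
  | zero => simp [hP.init]
  | succ s ih =>
    have hpath : y + Pi.single i ((s + 1 : ℕ) : ℤ) = y + unitVec d i + Pi.single i (s : ℤ) := by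
      rw [unitVec, add_assoc, ← Pi.single_add]
      push_cast; ring_nf
    rw [hpath]
    exact (mul_pos (hP.pos_add y i) (ih _)).trans_le (hP.mul_le_succ_of_add _ _ _ i)

lemma pos_sub_single (hP : IsRandomWalk d P) (i : Fin (d + 1)) (s : ℕ)
    (y : Fin (d + 1) → ℤ) : 0 < P s y (y - Pi.single i (s : ℤ)) := by
  induction s generalizing y with
  | zero => simp [hP.init]
  | succ s ih =>
    have hpath : y - Pi.single i ((s + 1 : ℕ) : ℤ) = y - unitVec d i - Pi.single i (s : ℤ) := by
      rw [unitVec, sub_sub, ← Pi.single_add]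
      push_cast; ring_nf
    rw [hpath]
    exact (mul_pos (hP.pos_sub y i) (ih _)).trans_le (hP.mul_le_succ_of_sub _ _ _ i)

lemma eq_zero_of_lt_norm1 (hP : IsRandomWalk d P) {s : ℕ} {y z : Fin (d + 1) → ℤ}
    (h : (s : ℤ) < norm1 (z - y)) : P s y z = 0 := by
  induction s generalizing y with
  | zero => rw [hP.init, if_neg]; rintro rfl; simp [norm1] at h
  | succ s ih =>
    have hfar : ∀ v, norm1 v = 1 → P s (y + v) z = 0 := fun v hv => ih <| by
      have := norm1_add_le (z - (y + v)) v
      rw [show z - (y + v) + v = z - y by abel, hv] at this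
      push_cast at h
      linarith
    have hfar_add : ∀ i, P s (y + unitVec d i) z = 0 := fun i => hfar _ (norm1_unitVec i)
    have hfar_sub : ∀ i, P s (y - unitVec d i) z = 0 := fun i => by
      rw [sub_eq_add_neg]; exact hfar _ (by rw [norm1_neg, norm1_unitVec])
    rw [hP.step s]
    simp only [hfar_add, hfar_sub, mul_zero, sum_const_zero, add_zero]

lemma eq_zero_of_le_abs (hP : IsRandomWalk d P) {s : ℕ} {y z : Fin (d + 1) → ℤ}
    {i : Fin (d + 1)} (hy : y i = 0) (hz : z i = 0) {c : ℤ} (hc : (s : ℤ) ≤ |c|)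
    (hne : z ≠ y ∨ (s : ℤ) < |c|) : P s y (z + Pi.single i c) = 0 := by
  apply hP.eq_zero_of_lt_norm1
  rw [show z + Pi.single i c - y = z - y + Pi.single i c by abel,
    norm1_add_single_of_eq_zero (by simp [hy, hz])]
  rcases hne with hzy | hlt
  · linarith [norm1_pos (sub_ne_zero.mpr hzy)]
  · linarith [norm1_nonneg (z - y)]

end IsRandomWalk

lemma last_eq_zero_of_mem_Sset {d t : ℕ} {x : Fin (d + 1) → ℤ} {p : ℕ × (Fin (d + 1) → ℤ)}
    (hp : p ∈ Sset d t x) : p.2 (Fin.last d) = 0 :=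
  (mem_filter.mp hp).2.1

theorem det_shift_matrix_eq_prod_diag {d : ℕ}
    {P : ℕ → (Fin (d + 1) → ℤ) → (Fin (d + 1) → ℤ) → ℝ} (hP : IsRandomWalk d P)
    (t : ℕ) (x : Fin (d + 1) → ℤ) (c : ℕ → ℤ) (hc : ∀ u, |c u| = u) :
    (Matrix.of fun p q : {p // p ∈ Sset d t x} =>
        P p.1.1 p.1.2 (q.1.2 + Pi.single (Fin.last d) (c q.1.1))).det =
      ∏ p : {p // p ∈ Sset d t x}, P p.1.1 p.1.2 (p.1.2 + Pi.single (Fin.last d) (c p.1.1)) := by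
  refine Matrix.BlockTriangular.det_eq_prod_diag (b := fun p => OrderDual.toDual p.1.1) ?_ ?_
  · intro p q hlt
    have hlt : (p.1.1 : ℤ) < q.1.1 := by exact_mod_cast hlt
    exact hP.eq_zero_of_le_abs (last_eq_zero_of_mem_Sset p.2) (last_eq_zero_of_mem_Sset q.2)
      (by rw [hc]; exact hlt.le) (Or.inr (by rwa [hc]))
  · intro p q hpq heq
    have heq : p.1.1 = q.1.1 := heq
    exact hP.eq_zero_of_le_abs (last_eq_zero_of_mem_Sset p.2) (last_eq_zero_of_mem_Sset q.2)
      (by rw [hc]; exact_mod_cast heq.le)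
      (Or.inl fun hzy => hpq (Subtype.ext (Prod.ext heq hzy.symm)))

theorem stmt_6_general (d : ℕ) (P : ℕ → (Fin (d + 1) → ℤ) → (Fin (d + 1) → ℤ) → ℝ)
    (hP : IsRandomWalk d P) (t : ℕ)
    (x : Fin (d + 1) → ℤ) :
    (Wplus P t x).det =
      (∏ p : {p // p ∈ Sset d t x},
        P p.1.1 p.1.2 (p.1.2 + Pi.single (Fin.last d) (p.1.1 : ℤ))) ∧
    (Wminus P t x).det =
      (∏ p : {p // p ∈ Sset d t x},
        P p.1.1 p.1.2 (p.1.2 - Pi.single (Fin.last d) (p.1.1 : ℤ))) ∧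
    0 < (Wplus P t x).det ∧ 0 < (Wminus P t x).det ∧
    IsUnit (Wplus P t x) ∧ IsUnit (Wminus P t x) := by
  have hdet_plus := det_shift_matrix_eq_prod_diag hP t x (↑) Nat.abs_cast
  have hdet_minus := det_shift_matrix_eq_prod_diag hP t x (fun u => -u) (by simp)
  simp only [Pi.single_neg, ← sub_eq_add_neg] at hdet_minus
  change (Wplus P t x).det = _ at hdet_plus
  change (Wminus P t x).det = _ at hdet_minus
  have hpos_plus : 0 < (Wplus P t x).det :=
    hdet_plus ▸ prod_pos fun p _ => hP.pos_add_single _ _ _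
  have hpos_minus : 0 < (Wminus P t x).det :=
    hdet_minus ▸ prod_pos fun p _ => hP.pos_sub_single _ _ _
  exact ⟨hdet_plus, hdet_minus, hpos_plus, hpos_minus,
    (Matrix.isUnit_iff_isUnit_det _).mpr hpos_plus.ne'.isUnit,
    (Matrix.isUnit_iff_isUnit_det _).mpr hpos_minus.ne'.isUnit⟩

/-- `det W^±_{t,x} = ∏_{(s,y) ∈ S(t,x)} P(Z^y_s = y ± s e_d) > 0`;
in particular `W^±_{t,x}` are invertible. -/
theorem stmt_6 (d : ℕ) (P : ℕ → (Fin (d + 1) → ℤ) → (Fin (d + 1) → ℤ) → ℝ)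
    (hP : IsRandomWalk d P) (t : ℕ) (ht : 1 ≤ t)
    (x : Fin (d + 1) → ℤ) (hx : x (Fin.last d) = 0) :
    (Wplus P t x).det =
      (∏ p : {p // p ∈ Sset d t x},
        P p.1.1 p.1.2 (p.1.2 + Pi.single (Fin.last d) (p.1.1 : ℤ))) ∧
    (Wminus P t x).det =
      (∏ p : {p // p ∈ Sset d t x},
        P p.1.1 p.1.2 (p.1.2 - Pi.single (Fin.last d) (p.1.1 : ℤ))) ∧
    0 < (Wplus P t x).det ∧ 0 < (Wminus P t x).det ∧
    IsUnit (Wplus P t x) ∧ IsUnit (Wminus P t x) :=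
  stmt_6_general d P hP t x
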